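/- Fix a finite MDP, c ≥ 0, and suppose L is a γ-span contraction with 0 ≤ γ < 1. If (g₁, h₁) ∈ ℝ × ℝ^S and (g₂, h₂) ∈ ℝ × ℝ^S both satisfy the optimality equation T_c h = h + g e (with e the all-ones vector), then g₁ = g₂ and there exists λ ∈ ℝ such that h₂ = h₁ + λ e. -/

import Mathlib

open Finset

/-- Span semi-norm of a vector `v : S → ℝ` on a nonempty finite set `S`. -/
noncomputable def span {S : Type*} [Fintype S] [Nonempty S] (v : S → ℝ) : ℝ :=
  Finset.univ.sup' Finset.univ_nonempty v - Finset.univ.inf' Finset.univ_nonempty v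

/-- Optimal Bellman operator `L v (s) = max_a (r s a + Σ_{s'} p s a s' * v s')` of a
finite MDP with state space `S`, action spaces `A s`, rewards `r` and transition kernel `p`. -/
noncomputable def bellman {S : Type*} [Fintype S] [Nonempty S] {A : S → Type*}
    [∀ s, Fintype (A s)] [∀ s, Nonempty (A s)]
    (r : ∀ s, A s → ℝ) (p : ∀ s, A s → S → ℝ) (v : S → ℝ) : S → ℝ :=
  fun s => Finset.univ.sup' Finset.univ_nonempty
    (fun a : A s => r s a + ∑ s', p s a s' * v s')

/-- Span-truncated optimal Bellman operator
`T_c v (s) = min (L v s) (min_x L v x + c)`. -/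
noncomputable def Tc {S : Type*} [Fintype S] [Nonempty S] {A : S → Type*}
    [∀ s, Fintype (A s)] [∀ s, Nonempty (A s)]
    (c : ℝ) (r : ∀ s, A s → ℝ) (p : ∀ s, A s → S → ℝ) (v : S → ℝ) : S → ℝ :=
  fun s => min (bellman r p v s)
    (Finset.univ.inf' Finset.univ_nonempty (bellman r p v) + c)

/-- Bellman operator of a randomized decision rule `d`:
`L_d v (s) = Σ_a d s a * (r s a + Σ_{s'} p s a s' * v s')`. -/
noncomputable def bellmanD {S : Type*} [Fintype S] {A : S → Type*} [∀ s, Fintype (A s)]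
    (r : ∀ s, A s → ℝ) (p : ∀ s, A s → S → ℝ)
    (d : ∀ s, A s → ℝ) (v : S → ℝ) : S → ℝ :=
  fun s => ∑ a, d s a * (r s a + ∑ s', p s a s' * v s')


lemma sup'_add_const' {α : Type*} (s : Finset α) (hs : s.Nonempty) (f : α → ℝ) (k : ℝ) :
    s.sup' hs (fun a => f a + k) = s.sup' hs f + k := by
  apply le_antisymm
  · exact Finset.sup'_le _ _ fun a ha => add_le_add_left (Finset.le_sup' f ha) k
  · have : s.sup' hs f ≤ s.sup' hs (fun a => f a + k) - k :=
      Finset.sup'_le _ _ fun a ha => by linarith [Finset.le_sup' (fun a => f a + k) ha]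
    linarith

lemma inf'_add_const' {α : Type*} (s : Finset α) (hs : s.Nonempty) (f : α → ℝ) (k : ℝ) :
    s.inf' hs (fun a => f a + k) = s.inf' hs f + k := by
  apply le_antisymm
  · obtain ⟨a, ha, hfa⟩ := Finset.exists_mem_eq_inf' hs f
    have := Finset.inf'_le (fun a => f a + k) ha
    linarith
  · exact Finset.le_inf' _ _ fun a ha => add_le_add_left (Finset.inf'_le f ha) k

lemma span_add_const {S : Type*} [Fintype S] [Nonempty S] (v : S → ℝ) (k : ℝ) :
    span (fun s => v s + k) = span v := by
  unfold span
  rw [sup'_add_const', inf'_add_const']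
  ring

lemma span_nonneg {S : Type*} [Fintype S] [Nonempty S] (v : S → ℝ) : 0 ≤ span v := by
  obtain ⟨s⟩ := ‹Nonempty S›
  have h1 := Finset.le_sup' v (Finset.mem_univ s)
  have h2 := Finset.inf'_le v (Finset.mem_univ s)
  unfold span; linarith

lemma span_eq_zero_const {S : Type*} [Fintype S] [Nonempty S] {v : S → ℝ}
    (h : span v = 0) (s t : S) : v s = v t := by
  unfold span at h
  have h1 := Finset.le_sup' v (Finset.mem_univ s)
  have h2 := Finset.inf'_le v (Finset.mem_univ s)
  have h3 := Finset.le_sup' v (Finset.mem_univ t)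
  have h4 := Finset.inf'_le v (Finset.mem_univ t)
  linarith

lemma span_Tc_le {S : Type*} [Fintype S] [Nonempty S] {A : S → Type*}
    [∀ s, Fintype (A s)] [∀ s, Nonempty (A s)]
    (c : ℝ) (r : ∀ s, A s → ℝ) (p : ∀ s, A s → S → ℝ) (u v : S → ℝ) :
    span (fun s => Tc c r p u s - Tc c r p v s) ≤
      span (fun s => bellman r p u s - bellman r p v s) := by
  set D : S → ℝ := fun s => bellman r p u s - bellman r p v s with hD
  set M : ℝ := Finset.univ.sup' Finset.univ_nonempty D with hM
  set m : ℝ := Finset.univ.inf' Finset.univ_nonempty D with hm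
  have hinfdiff_le : Finset.univ.inf' Finset.univ_nonempty (bellman r p u) -
      Finset.univ.inf' Finset.univ_nonempty (bellman r p v) ≤ M := by
    obtain ⟨s₀, _, hs₀⟩ := Finset.exists_mem_eq_inf' Finset.univ_nonempty (bellman r p v)
    have h1 : Finset.univ.inf' Finset.univ_nonempty (bellman r p u) ≤ bellman r p u s₀ :=
      Finset.inf'_le _ (Finset.mem_univ s₀)
    have h2 : D s₀ ≤ M := Finset.le_sup' D (Finset.mem_univ s₀)
    simp only [hD] at h2
    linarith [hs₀ ▸ (le_refl (Finset.univ.inf' Finset.univ_nonempty (bellman r p v)))]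
  have hinfdiff_ge : m ≤ Finset.univ.inf' Finset.univ_nonempty (bellman r p u) -
      Finset.univ.inf' Finset.univ_nonempty (bellman r p v) := by
    obtain ⟨s₀, _, hs₀⟩ := Finset.exists_mem_eq_inf' Finset.univ_nonempty (bellman r p u)
    have h1 : Finset.univ.inf' Finset.univ_nonempty (bellman r p v) ≤ bellman r p v s₀ :=
      Finset.inf'_le _ (Finset.mem_univ s₀)
    have h2 : m ≤ D s₀ := Finset.inf'_le D (Finset.mem_univ s₀)
    simp only [hD] at h2
    linarith [hs₀ ▸ (le_refl (Finset.univ.inf' Finset.univ_nonempty (bellman r p u)))]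
  have hub : ∀ s, Tc c r p u s - Tc c r p v s ≤ M := by
    intro s
    have hDs : D s ≤ M := Finset.le_sup' D (Finset.mem_univ s)
    simp only [hD] at hDs
    unfold Tc
    rcases le_total (bellman r p v s)
        (Finset.univ.inf' Finset.univ_nonempty (bellman r p v) + c) with h | h
    · rw [min_eq_left h]
      have := min_le_left (bellman r p u s)
        (Finset.univ.inf' Finset.univ_nonempty (bellman r p u) + c)
      linarith
    · rw [min_eq_right h]
      have := min_le_right (bellman r p u s)
        (Finset.univ.inf' Finset.univ_nonempty (bellman r p u) + c)
      linarith
  have hlb : ∀ s, m ≤ Tc c r p u s - Tc c r p v s := by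
    intro s
    have hDs : m ≤ D s := Finset.inf'_le D (Finset.mem_univ s)
    simp only [hD] at hDs
    unfold Tc
    rcases le_total (bellman r p u s)
        (Finset.univ.inf' Finset.univ_nonempty (bellman r p u) + c) with h | h
    · rw [min_eq_left h]
      have := min_le_left (bellman r p v s)
        (Finset.univ.inf' Finset.univ_nonempty (bellman r p v) + c)
      linarith
    · rw [min_eq_right h]
      have := min_le_right (bellman r p v s)
        (Finset.univ.inf' Finset.univ_nonempty (bellman r p v) + c)
      linarith
  unfold span
  have h1 : Finset.univ.sup' Finset.univ_nonempty
      (fun s => Tc c r p u s - Tc c r p v s) ≤ M :=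
    Finset.sup'_le _ _ fun s _ => hub s
  have h2 : m ≤ Finset.univ.inf' Finset.univ_nonempty
      (fun s => Tc c r p u s - Tc c r p v s) :=
    Finset.le_inf' _ _ fun s _ => hlb s
  linarith

lemma bellman_add_const {S : Type*} [Fintype S] [Nonempty S] {A : S → Type*}
    [∀ s, Fintype (A s)] [∀ s, Nonempty (A s)]
    (r : ∀ s, A s → ℝ) (p : ∀ s, A s → S → ℝ)
    (hp1 : ∀ s a, ∑ s', p s a s' = 1) (v : S → ℝ) (k : ℝ) (s : S) :
    bellman r p (fun s' => v s' + k) s = bellman r p v s + k := by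
  unfold bellman
  rw [← sup'_add_const']
  apply Finset.sup'_congr _ rfl
  intro a _
  have : ∑ s', p s a s' * (v s' + k) = (∑ s', p s a s' * v s') + k := by
    rw [Finset.sum_congr rfl (fun s' _ => mul_add (p s a s') (v s') k),
      Finset.sum_add_distrib, ← Finset.sum_mul, hp1, one_mul]
  rw [this]; ring

lemma Tc_add_const {S : Type*} [Fintype S] [Nonempty S] {A : S → Type*}
    [∀ s, Fintype (A s)] [∀ s, Nonempty (A s)]
    (c : ℝ) (r : ∀ s, A s → ℝ) (p : ∀ s, A s → S → ℝ)
    (hp1 : ∀ s a, ∑ s', p s a s' = 1) (v : S → ℝ) (k : ℝ) (s : S) :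
    Tc c r p (fun s' => v s' + k) s = Tc c r p v s + k := by
  unfold Tc
  have h1 : ∀ x, bellman r p (fun s' => v s' + k) x = bellman r p v x + k :=
    bellman_add_const r p hp1 v k
  rw [h1]
  have h2 : Finset.univ.inf' Finset.univ_nonempty (bellman r p (fun s' => v s' + k)) =
      Finset.univ.inf' Finset.univ_nonempty (bellman r p v) + k := by
    rw [Finset.inf'_congr Finset.univ_nonempty rfl (fun x _ => h1 x), inf'_add_const']
  rw [h2]
  rw [show Finset.univ.inf' Finset.univ_nonempty (bellman r p v) + k + c =
    Finset.univ.inf' Finset.univ_nonempty (bellman r p v) + c + k by ring]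
  exact (min_add_add_right _ _ _)

theorem Tc_optimality_equation_unique {S : Type*} [Fintype S] [Nonempty S] {A : S → Type*}
    [∀ s, Fintype (A s)] [∀ s, Nonempty (A s)]
    (r : ∀ s, A s → ℝ) (p : ∀ s, A s → S → ℝ)
    (hp0 : ∀ s a s', 0 ≤ p s a s') (hp1 : ∀ s a, ∑ s', p s a s' = 1)
    (c : ℝ) (hc : 0 ≤ c)
    (γ : ℝ) (hγ0 : 0 ≤ γ) (hγ1 : γ < 1)
    (hL : ∀ u v : S → ℝ,
      span (fun s => bellman r p u s - bellman r p v s) ≤ γ * span (fun s => u s - v s))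
    (g₁ g₂ : ℝ) (h₁ h₂ : S → ℝ)
    (H1 : ∀ s, Tc c r p h₁ s = h₁ s + g₁)
    (H2 : ∀ s, Tc c r p h₂ s = h₂ s + g₂) :
    g₁ = g₂ ∧ ∃ lam : ℝ, ∀ s, h₂ s = h₁ s + lam := by
  -- span of h₁ - h₂ is zero
  have key : span (fun s => h₁ s - h₂ s) ≤ γ * span (fun s => h₁ s - h₂ s) := by
    have h1 : span (fun s => Tc c r p h₁ s - Tc c r p h₂ s) ≤
        γ * span (fun s => h₁ s - h₂ s) :=
      le_trans (span_Tc_le c r p h₁ h₂) (hL h₁ h₂)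
    have h2 : span (fun s => Tc c r p h₁ s - Tc c r p h₂ s) =
        span (fun s => h₁ s - h₂ s) := by
      have : (fun s => Tc c r p h₁ s - Tc c r p h₂ s) =
          (fun s => (h₁ s - h₂ s) + (g₁ - g₂)) := by
        funext s; rw [H1 s, H2 s]; ring
      rw [this, span_add_const]
    linarith
  have hsp0 : span (fun s => h₁ s - h₂ s) = 0 := by
    have := span_nonneg (fun s => h₁ s - h₂ s)
    nlinarith
  obtain ⟨s₀⟩ := ‹Nonempty S›
  set lam : ℝ := h₂ s₀ - h₁ s₀ with hlam
  have hconst : ∀ s, h₂ s = h₁ s + lam := by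
    intro s
    have := span_eq_zero_const hsp0 s s₀
    simp only [hlam]; linarith
  constructor
  · have h2eq : h₂ = fun s => h₁ s + lam := funext hconst
    have := H2 s₀
    rw [h2eq] at this
    rw [Tc_add_const c r p hp1 h₁ lam s₀] at this
    have h1eq := H1 s₀
    simp only at this
    linarith
  · exact ⟨lam, hconst⟩
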